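/- arXiv:2308.03067 — 5 statements merged into one kernel-verified Lean document; each statement's English description precedes it below -/
import Mathlib

section
/- Let A be an abelian category and (C, F) a complete cotorsion pair in A. Then (C, F) is hereditary (i.e. both resolving and coresolving) if and only if it is resolving, if and only if it is coresolving. -/
open CategoryTheory CategoryTheory.Limits

universe v u

namespace Paper

variable {C : Type u} [Category.{v} C] [Abelian C]

/-- `Ext¹(A, B) = 0`, expressed by the property that every short exact sequence
`0 → B → E → A → 0` splits. -/
def Ext1Zero (A B : C) : Prop :=
  ∀ ⦃E : C⦄ (i : B ⟶ E) (p : E ⟶ A) (w : i ≫ p = 0),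
    Mono i → Epi p → (ShortComplex.mk i p w).Exact → ∃ r : E ⟶ B, i ≫ r = 𝟙 B

/-- `0 → X → Y → Z → 0` is a short exact sequence. -/
def IsSES {X Y Z : C} (i : X ⟶ Y) (p : Y ⟶ Z) : Prop :=
  Mono i ∧ Epi p ∧ ∃ w : i ≫ p = 0, (ShortComplex.mk i p w).Exact

/-- `(Q, F)` is a cotorsion pair: `Q^⊥ = F` and `^⊥F = Q` with respect to `Ext¹`. -/
structure CotorsionPair (Q F : C → Prop) : Prop where
  right_eq : ∀ B, F B ↔ ∀ A, Q A → Ext1Zero A B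
  left_eq : ∀ A, Q A ↔ ∀ B, F B → Ext1Zero A B

/-- Completeness of a cotorsion pair: every object admits approximations on both sides. -/
def CompletePair (Q F : C → Prop) : Prop :=
  ∀ M : C,
    (∃ (D E : C) (i : D ⟶ E) (p : E ⟶ M), IsSES i p ∧ F D ∧ Q E) ∧
    (∃ (D' E' : C) (i : M ⟶ D') (p : D' ⟶ E'), IsSES i p ∧ F D' ∧ Q E')

/-- `Q` is closed under kernels of epimorphisms between objects of `Q`. -/
def Resolving (Q : C → Prop) : Prop :=
  ∀ ⦃X Y Z : C⦄ (i : X ⟶ Y) (p : Y ⟶ Z), IsSES i p → Q Y → Q Z → Q X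

/-- `F` is closed under cokernels of monomorphisms between objects of `F`. -/
def Coresolving (F : C → Prop) : Prop :=
  ∀ ⦃X Y Z : C⦄ (i : X ⟶ Y) (p : Y ⟶ Z), IsSES i p → F X → F Y → F Z

/-- A thick subcategory: closed under direct summands, extensions, kernels of
epimorphisms and cokernels of monomorphisms. -/
structure Thick (W : C → Prop) : Prop where
  retract : ∀ ⦃X Y : C⦄ (s : X ⟶ Y) (r : Y ⟶ X), s ≫ r = 𝟙 X → W Y → W X
  extensions : ∀ ⦃X Y Z : C⦄ (i : X ⟶ Y) (p : Y ⟶ Z), IsSES i p → W X → W Z → W Y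
  ker_of_epi : ∀ ⦃X Y Z : C⦄ (i : X ⟶ Y) (p : Y ⟶ Z), IsSES i p → W Y → W Z → W X
  coker_of_mono : ∀ ⦃X Y Z : C⦄ (i : X ⟶ Y) (p : Y ⟶ Z), IsSES i p → W X → W Y → W Z

/-- A Hovey triple `(Q, W, R)`: `W` is thick and both `(Q, W ∩ R)` and `(Q ∩ W, R)`
are complete cotorsion pairs. -/
structure HoveyTriple (Q W R : C → Prop) : Prop where
  thick : Thick W
  cp₁ : CotorsionPair Q (fun X => W X ∧ R X)
  complete₁ : CompletePair Q (fun X => W X ∧ R X)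
  cp₂ : CotorsionPair (fun X => Q X ∧ W X) R
  complete₂ : CompletePair (fun X => Q X ∧ W X) R

/-- `(Q, W, R)` is a hereditary Hovey triple. -/
def HereditaryHoveyTriple (Q W R : C → Prop) : Prop :=
  HoveyTriple Q W R ∧
    (Resolving Q ∧ Coresolving (fun X => W X ∧ R X)) ∧
    (Resolving (fun X => Q X ∧ W X) ∧ Coresolving R)

/-!
Resolving implies coresolving: let `0 → X → Y → Z → 0` be exact with `X, Y ∈ F`, and let
`0 → Z → E → A → 0` be an extension with `A ∈ Q`. Choose an epimorphism `G → E` with `G ∈ Q`;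
the kernel `L` of `G → E → A` lies in `Q` because `Q` is resolving. The induced map `L → Z`
lifts to `Y` since `Ext¹(L, X) = 0`, and that lift extends to `G` since `Ext¹(A, Y) = 0`;
an extension of `L → Z` along `L → G` splits `E → A`. The converse implication is the same
statement for the cotorsion pair `(Fᵒᵖ, Qᵒᵖ)` in the opposite category.
-/

namespace IsSES

variable {X Y Z : C} {i : X ⟶ Y} {p : Y ⟶ Z}

lemma mono (h : IsSES i p) : Mono i := h.1

lemma epi (h : IsSES i p) : Epi p := h.2.1

lemma w (h : IsSES i p) : i ≫ p = 0 := h.2.2.choose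

lemma exact (h : IsSES i p) : (ShortComplex.mk i p h.w).Exact := h.2.2.choose_spec

lemma exists_section_iff_exists_retraction (h : IsSES i p) :
    (∃ s : Z ⟶ Y, s ≫ p = 𝟙 Z) ↔ ∃ r : Y ⟶ X, i ≫ r = 𝟙 X := by
  constructor
  · rintro ⟨s, hs⟩
    exact ⟨_, (ShortComplex.Splitting.ofExactOfSection _ h.exact s hs h.mono).f_r⟩
  · rintro ⟨r, hr⟩
    exact ⟨_, (ShortComplex.Splitting.ofExactOfRetraction _ h.exact r hr h.epi).s_g⟩

lemma op (h : IsSES i p) : IsSES p.op i.op :=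
  have := h.mono
  have := h.epi
  ⟨inferInstance, inferInstance, congrArg Quiver.Hom.op h.w, h.exact.op⟩

lemma unop {X Y Z : Cᵒᵖ} {i : X ⟶ Y} {p : Y ⟶ Z} (h : IsSES i p) : IsSES p.unop i.unop :=
  have := h.mono
  have := h.epi
  ⟨inferInstance, inferInstance, congrArg Quiver.Hom.unop h.w, h.exact.unop⟩

end IsSES

lemma isSES_kernel {Y Z : C} (p : Y ⟶ Z) [Epi p] : IsSES (kernel.ι p) p :=
  ⟨inferInstance, inferInstance, kernel.condition p,
    ShortComplex.exact_of_f_is_kernel _ (kernelIsKernel p)⟩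

lemma IsSES.pushout {L G A Y : C} {ι : L ⟶ G} {q : G ⟶ A} (h : IsSES ι q) (f : L ⟶ Y) :
    ∃ δ : pushout ι f ⟶ A, pushout.inl ι f ≫ δ = q ∧ IsSES (pushout.inr ι f) δ := by
  have := h.mono
  have := h.epi
  have hw : ι ≫ q = f ≫ (0 : Y ⟶ A) := by rw [h.w, comp_zero]
  have hδ : pushout.inl ι f ≫ pushout.desc q 0 hw = q := pushout.inl_desc _ _ _
  have : Epi (pushout.desc q 0 hw) := by
    have : Epi (pushout.inl ι f ≫ pushout.desc q 0 hw) := by rw [hδ]; infer_instance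
    exact epi_of_epi (pushout.inl ι f) _
  refine ⟨_, hδ, inferInstance, inferInstance, pushout.inr_desc _ _ _, ?_⟩
  refine ShortComplex.exact_of_g_is_cokernel _ <|
    CokernelCofork.IsColimit.ofπ' _ _ fun {W} k hk => ?_
  have hk' : ι ≫ pushout.inl ι f ≫ k = 0 := by
    rw [← Category.assoc, pushout.condition, Category.assoc, hk, comp_zero]
  refine ⟨h.exact.desc (pushout.inl ι f ≫ k) hk', pushout.hom_ext ?_ ?_⟩
  · rw [← Category.assoc, hδ]
    exact h.exact.g_desc _ _
  · rw [← Category.assoc, pushout.inr_desc, zero_comp]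
    exact hk.symm

namespace Ext1Zero

lemma exists_retraction {A B E : C} (h : Ext1Zero A B) {i : B ⟶ E} {p : E ⟶ A}
    (hip : IsSES i p) : ∃ r : E ⟶ B, i ≫ r = 𝟙 B :=
  h i p hip.w hip.mono hip.epi hip.exact

lemma of_exists_section {A B : C}
    (h : ∀ ⦃E : C⦄ (i : B ⟶ E) (p : E ⟶ A), IsSES i p → ∃ s : A ⟶ E, s ≫ p = 𝟙 A) :
    Ext1Zero A B := fun _ i p w hi hp hex =>
  have hip : IsSES i p := ⟨hi, hp, w, hex⟩
  hip.exists_section_iff_exists_retraction.1 (h i p hip)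

lemma op_iff {A B : Cᵒᵖ} : Ext1Zero A B ↔ Ext1Zero B.unop A.unop := by
  constructor
  · refine fun h => of_exists_section fun E i p hip => ?_
    obtain ⟨r, hr⟩ := h.exists_retraction hip.op
    exact ⟨r.unop, congrArg Quiver.Hom.unop hr⟩
  · refine fun h => of_exists_section fun E i p hip => ?_
    obtain ⟨r, hr⟩ := h.exists_retraction hip.unop
    exact ⟨r.op, congrArg Quiver.Hom.op hr⟩

lemma exists_extension {A Y L G : C} (h : Ext1Zero A Y) {ι : L ⟶ G} {q : G ⟶ A}
    (hιq : IsSES ι q) (f : L ⟶ Y) : ∃ g : G ⟶ Y, ι ≫ g = f := by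
  obtain ⟨δ, -, hδ⟩ := hιq.pushout f
  obtain ⟨r, hr⟩ := h.exists_retraction hδ
  exact ⟨pushout.inl ι f ≫ r, by rw [← Category.assoc, pushout.condition, Category.assoc, hr,
    Category.comp_id]⟩

lemma exists_lift {L X Y Z : C} (h : Ext1Zero L X) {m : X ⟶ Y} {p : Y ⟶ Z}
    (hmp : IsSES m p) (f : L ⟶ Z) : ∃ g : L ⟶ Y, g ≫ p = f := by
  obtain ⟨g, hg⟩ := (op_iff.2 h).exists_extension hmp.op f.op
  exact ⟨g.unop, congrArg Quiver.Hom.unop hg⟩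

end Ext1Zero

lemma IsSES.exists_section_of_extends {L G A Z E : C} {ι : L ⟶ G} {q : G ⟶ A}
    (hιq : IsSES ι q) {i : Z ⟶ E} {π : E ⟶ A} (hiπ : i ≫ π = 0) (v : G ⟶ E) (hv : v ≫ π = q)
    (g : G ⟶ Z) (hg : ι ≫ g ≫ i = ι ≫ v) : ∃ s : A ⟶ E, s ≫ π = 𝟙 A := by
  have := hιq.epi
  have hvg : ι ≫ (v - g ≫ i) = 0 := by rw [Preadditive.comp_sub, hg, sub_self]
  refine ⟨hιq.exact.desc _ hvg, ?_⟩
  rw [← cancel_epi q, ← Category.assoc, hιq.exact.g_desc]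
  simp [Preadditive.sub_comp, hv, hiπ]

variable {Q F : C → Prop}

lemma CotorsionPair.op (hcp : CotorsionPair Q F) :
    CotorsionPair (fun X : Cᵒᵖ => F X.unop) (fun X => Q X.unop) where
  right_eq B := by
    simp only [Ext1Zero.op_iff]
    exact (hcp.left_eq B.unop).trans ⟨fun h A => h A.unop, fun h A => h (Opposite.op A)⟩
  left_eq A := by
    simp only [Ext1Zero.op_iff]
    exact (hcp.right_eq A.unop).trans ⟨fun h B => h B.unop, fun h B => h (Opposite.op B)⟩

lemma CompletePair.op (hcomplete : CompletePair Q F) :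
    CompletePair (fun X : Cᵒᵖ => F X.unop) (fun X => Q X.unop) := fun M => by
  obtain ⟨⟨D, E, i, p, hip, hD, hE⟩, ⟨D', E', i', p', hip', hD', hE'⟩⟩ := hcomplete M.unop
  exact ⟨⟨_, _, p'.op, i'.op, hip'.op, hE', hD'⟩, ⟨_, _, p.op, i.op, hip.op, hE, hD⟩⟩

lemma Coresolving.resolving_op (hF : Coresolving F) : Resolving (fun X : Cᵒᵖ => F X.unop) :=
  fun _ _ _ _ _ hip hY hZ => hF _ _ hip.unop hZ hY

lemma Resolving.of_coresolving_op (hQ : Coresolving (fun X : Cᵒᵖ => Q X.unop)) : Resolving Q :=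
  fun _ _ _ _ _ hip hY hZ => hQ _ _ hip.op hZ hY

lemma CotorsionPair.coresolving_of_resolving (hcp : CotorsionPair Q F)
    (hcomplete : CompletePair Q F) (hQ : Resolving Q) : Coresolving F := by
  intro X Y Z m p hmp hX hY
  refine (hcp.right_eq Z).2 fun A hA => Ext1Zero.of_exists_section fun E i π hiπ => ?_
  obtain ⟨_, G, _, v, hv, -, hG⟩ := (hcomplete E).1
  have := hv.epi
  have := hiπ.mono
  have := hiπ.epi
  have hL : Q (kernel (v ≫ π)) := hQ _ _ (isSES_kernel _) hG hA
  let u : kernel (v ≫ π) ⟶ Z := hiπ.exact.lift (kernel.ι (v ≫ π) ≫ v) (by simp)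
  obtain ⟨u', hu'⟩ := ((hcp.right_eq X).1 hX _ hL).exists_lift hmp u
  obtain ⟨g, hg⟩ := ((hcp.right_eq Y).1 hY A hA).exists_extension (isSES_kernel (v ≫ π)) u'
  refine (isSES_kernel (v ≫ π)).exists_section_of_extends hiπ.w v rfl (g ≫ p) ?_
  simp only [← Category.assoc, hg, hu']
  exact hiπ.exact.lift_f _ _

lemma CotorsionPair.resolving_of_coresolving (hcp : CotorsionPair Q F)
    (hcomplete : CompletePair Q F) (hF : Coresolving F) : Resolving Q :=
  Resolving.of_coresolving_op <| hcp.op.coresolving_of_resolving hcomplete.op hF.resolving_op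

end Paper

open Paper in
theorem stmt0 {C : Type u} [CategoryTheory.Category.{v} C] [CategoryTheory.Abelian C]
    (Q F : C → Prop) (hcp : CotorsionPair Q F) (hcomplete : CompletePair Q F) :
    ((Resolving Q ∧ Coresolving F) ↔ Resolving Q) ∧
    ((Resolving Q ∧ Coresolving F) ↔ Coresolving F) :=
  ⟨⟨And.left, fun hQ => ⟨hQ, hcp.coresolving_of_resolving hcomplete hQ⟩⟩,
    ⟨And.right, fun hF => ⟨hcp.resolving_of_coresolving hcomplete hF, hF⟩⟩⟩
end

section
/- Let (Q, W, R) be a Hovey triple in a bicomplete abelian category A. Then W equals the class of objects M admitting a short exact sequence 0 → M → A → B → 0 with A ∈ W ∩ R and B ∈ Q ∩ W, and also equals the class of objects M admitting a short exact sequence 0 → A' → B' → M → 0 with A' ∈ W ∩ R and B' ∈ Q ∩ W. -/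
open CategoryTheory CategoryTheory.Limits

universe v u

open Paper in
theorem stmt1 {C : Type u} [CategoryTheory.Category.{v} C] [CategoryTheory.Abelian C]
    [CategoryTheory.Limits.HasLimits C] [CategoryTheory.Limits.HasColimits C]
    (Q W R : C → Prop) (h : HoveyTriple Q W R) :
    (∀ M : C, W M ↔ ∃ (A B : C) (i : M ⟶ A) (p : A ⟶ B),
        IsSES i p ∧ (W A ∧ R A) ∧ (Q B ∧ W B)) ∧
    (∀ M : C, W M ↔ ∃ (A' B' : C) (i : A' ⟶ B') (p : B' ⟶ M),
        IsSES i p ∧ (W A' ∧ R A') ∧ (Q B' ∧ W B')) := by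
  constructor
  · intro M
    constructor
    · intro hM
      obtain ⟨D', E', i, p, hses, hF, hQ⟩ := (h.complete₁ M).2
      exact ⟨D', E', i, p, hses, hF, hQ, h.thick.coker_of_mono i p hses hM hF.1⟩
    · rintro ⟨A, B, i, p, hses, hA, hB⟩
      exact h.thick.ker_of_epi i p hses hA.1 hB.2
  · intro M
    constructor
    · intro hM
      obtain ⟨D, E, i, p, hses, hR, hQW⟩ := (h.complete₂ M).1
      exact ⟨D, E, i, p, hses, ⟨h.thick.ker_of_epi i p hses hQW.2 hM, hR⟩, hQW⟩
    · rintro ⟨A', B', i, p, hses, hA, hB⟩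
      exact h.thick.coker_of_mono i p hses hA.1 hB.2
end

section
/- Let (Q, W, R) and (Q, V, R) be two Hovey triples in a bicomplete abelian category A sharing the same first and third components. Then V = W. -/
open CategoryTheory CategoryTheory.Limits

universe v u

open Paper in
theorem hovey_char {C : Type u} [CategoryTheory.Category.{v} C] [CategoryTheory.Abelian C]
    (Q W R : C → Prop) (h : HoveyTriple Q W R) (M : C) :
    W M ↔ ∃ (A B : C) (i : M ⟶ A) (p : A ⟶ B), IsSES i p ∧
      (∀ X, Q X → Ext1Zero X A) ∧ (∀ Y, R Y → Ext1Zero B Y) := by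
  constructor
  · intro hWM
    obtain ⟨-, D', E', i, p, ses, ⟨hWD, hRD⟩, hQE⟩ := h.complete₁ M
    have hWE : W E' := h.thick.coker_of_mono i p ses hWM hWD
    exact ⟨D', E', i, p, ses, (h.cp₁.right_eq D').mp ⟨hWD, hRD⟩,
      (h.cp₂.left_eq E').mp ⟨hQE, hWE⟩⟩
  · rintro ⟨A, B, i, p, ses, hA, hB⟩
    have hA' : W A ∧ R A := (h.cp₁.right_eq A).mpr hA
    have hB' : Q B ∧ W B := (h.cp₂.left_eq B).mpr hB
    exact h.thick.ker_of_epi i p ses hA'.1 hB'.2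

open Paper in
theorem stmt2 {C : Type u} [CategoryTheory.Category.{v} C] [CategoryTheory.Abelian C]
    [CategoryTheory.Limits.HasLimits C] [CategoryTheory.Limits.HasColimits C]
    (Q W V R : C → Prop) (h₁ : HoveyTriple Q W R) (h₂ : HoveyTriple Q V R) :
    ∀ M : C, V M ↔ W M := fun M =>
  (hovey_char Q V R h₂ M).trans (hovey_char Q W R h₁ M).symm
end

section
/- Let (Q, W, R) be a Hovey triple in a bicomplete abelian category A, and set Q̃ = Q ∩ W, R̃ = W ∩ R. Then Epi(R̃) = Epi(R) ∩ W̄ and Mon(Q̃) = Mon(Q) ∩ W̄, where W̄ is the class of morphisms that factor as f ∘ c with c ∈ Mon(Q̃) and f ∈ Epi(R̃). -/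
open CategoryTheory CategoryTheory.Limits

universe v u

namespace Paper

variable {C : Type u} [CategoryTheory.Category.{v} C] [CategoryTheory.Abelian C]

open CategoryTheory CategoryTheory.Limits

/-- `Mon(Y)`: monomorphisms with cokernel in `Y`. -/
def MonClass (Y : C → Prop) {X Z : C} (f : X ⟶ Z) : Prop :=
  Mono f ∧ Y (cokernel f)

/-- `Epi(Y)`: epimorphisms with kernel in `Y`. -/
def EpiClass (Y : C → Prop) {X Z : C} (f : X ⟶ Z) : Prop :=
  Epi f ∧ Y (kernel f)

/-- The class `W̄` of morphisms factoring as `f ∘ c` with `c ∈ Mon(Q ∩ W)` and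
`f ∈ Epi(W ∩ R)`. -/
def WClass (Q W R : C → Prop) {X Z : C} (f : X ⟶ Z) : Prop :=
  ∃ (E : C) (c : X ⟶ E) (p : E ⟶ Z),
    MonClass (fun A => Q A ∧ W A) c ∧ EpiClass (fun A => W A ∧ R A) p ∧ c ≫ p = f

end Paper

namespace Paper

section Aux

open CategoryTheory.Abelian
open scoped Pseudoelement

variable {C : Type u} [Category.{v} C] [Abelian C]

lemma hovey_Q_of_isZero {Q W R : C → Prop} (h : HoveyTriple Q W R)
    {Z₀ : C} (hZ : IsZero Z₀) : Q Z₀ := by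
  rw [h.cp₁.left_eq]
  intro B _ E i p w hi hp hex
  have hp0 : p = 0 := hZ.eq_of_tgt _ _
  haveI : Mono i := hi
  haveI : Epi i := hex.epi_f hp0
  haveI : IsIso i := isIso_of_mono_of_epi i
  exact ⟨inv i, IsIso.hom_inv_id i⟩

lemma hovey_WR_of_isZero {Q W R : C → Prop} (h : HoveyTriple Q W R)
    {Z₀ : C} (hZ : IsZero Z₀) : W Z₀ ∧ R Z₀ := by
  refine ⟨((h.cp₁.right_eq Z₀).2 ?_).1, (h.cp₂.right_eq Z₀).2 ?_⟩ <;>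
  · intro A _ E i p w hi hp hex
    exact ⟨0, hZ.eq_of_src _ _⟩

/-- Common pseudoelement argument: if `p (c x) = p e` then the class of `e` in
`cokernel c` lifts to `kernel p` along `kernel.ι p ≫ cokernel.π c`. -/
lemma exists_ker_to_coker {X E Z : C} (c : X ⟶ E) (p : E ⟶ Z)
    (e : Abelian.Pseudoelement E) (x : Abelian.Pseudoelement X)
    (hx : p (c x) = p e) :
    ∃ k : Abelian.Pseudoelement (kernel p),
      (kernel.ι p ≫ cokernel.π c) k = (cokernel.π c) e := by
  obtain ⟨z, hz0, hz⟩ := Abelian.Pseudoelement.sub_of_eq_image p e (c x) hx.symm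
  have h1 : (cokernel.π c) z = (cokernel.π c) e := by
    refine hz _ _ ?_
    rw [← Abelian.Pseudoelement.comp_apply, cokernel.condition]
    exact Abelian.Pseudoelement.zero_apply _ _
  obtain ⟨k, hk⟩ := Abelian.Pseudoelement.pseudo_exact_of_exact (ShortComplex.exact_kernel p) z hz0
  have hk' : (kernel.ι p) k = z := hk
  exact ⟨k, by rw [Abelian.Pseudoelement.comp_apply, hk', h1]⟩

/-- For a factorization `c ≫ p = f` with `f` epi, `c` mono, `p` epi, the sequence
`0 → ker f → ker p → coker c → 0` is short exact. -/
lemma sesA {X E Z : C} {c : X ⟶ E} {p : E ⟶ Z} {f : X ⟶ Z}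
    (hcp : c ≫ p = f) (hf : Epi f) (hc : Mono c) (hp : Epi p) :
    IsSES (kernel.lift p (kernel.ι f ≫ c)
        (by rw [Category.assoc, hcp, kernel.condition]))
      (kernel.ι p ≫ cokernel.π c) := by
  haveI := hf; haveI := hc; haveI := hp
  set c' : kernel f ⟶ kernel p := kernel.lift p (kernel.ι f ≫ c)
      (by rw [Category.assoc, hcp, kernel.condition]) with hc'def
  have hfac : c' ≫ kernel.ι p = kernel.ι f ≫ c := kernel.lift_ι _ _ _
  refine ⟨?_, ?_, ?_, ?_⟩
  · haveI : Mono (c' ≫ kernel.ι p) := by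
      rw [hfac]; exact mono_comp _ _
    exact mono_of_mono c' (kernel.ι p)
  · apply Abelian.Pseudoelement.epi_of_pseudo_surjective
    intro b
    obtain ⟨e, he⟩ := Abelian.Pseudoelement.pseudo_surjective_of_epi (cokernel.π c) b
    obtain ⟨x, hx⟩ := Abelian.Pseudoelement.pseudo_surjective_of_epi f ((p : E ⟶ Z) e)
    have hpe : p (c x) = p e := by
      rw [← Abelian.Pseudoelement.comp_apply, hcp, hx]
    obtain ⟨k, hk⟩ := exists_ker_to_coker c p e x hpe
    refine ⟨k, ?_⟩
    show (kernel.ι p ≫ cokernel.π c) k = b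
    rw [hk, he]
  · rw [← Category.assoc, hfac, Category.assoc, cokernel.condition, comp_zero]
  · apply Abelian.Pseudoelement.exact_of_pseudo_exact
    intro b hb
    have hπ : (cokernel.π c) ((kernel.ι p) b) = 0 := by
      rw [← Abelian.Pseudoelement.comp_apply]; exact hb
    obtain ⟨x, hx⟩ := Abelian.Pseudoelement.pseudo_exact_of_exact (ShortComplex.exact_cokernel c) _ hπ
    have hx' : c x = (kernel.ι p) b := hx
    have hfx : f x = 0 := by
      rw [← hcp, Abelian.Pseudoelement.comp_apply, hx', ← Abelian.Pseudoelement.comp_apply, kernel.condition]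
      exact Abelian.Pseudoelement.zero_apply _ _
    obtain ⟨k, hk⟩ := Abelian.Pseudoelement.pseudo_exact_of_exact (ShortComplex.exact_kernel f) x hfx
    have hk' : (kernel.ι f) k = x := hk
    refine ⟨k, ?_⟩
    have hgoal : (kernel.ι p) (c' k) = (kernel.ι p) b := by
      rw [← Abelian.Pseudoelement.comp_apply, hfac, Abelian.Pseudoelement.comp_apply, hk', hx']
    exact Abelian.Pseudoelement.pseudo_injective_of_mono (kernel.ι p) hgoal

/-- For a factorization `c ≫ p = f` with `f` mono and `p` epi, the sequence
`0 → ker p → coker c → coker f → 0` is short exact. -/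
lemma sesB {X E Z : C} {c : X ⟶ E} {p : E ⟶ Z} {f : X ⟶ Z}
    (hcp : c ≫ p = f) (hf : Mono f) (hp : Epi p) :
    IsSES (kernel.ι p ≫ cokernel.π c)
      (cokernel.desc c (p ≫ cokernel.π f)
        (by rw [← Category.assoc, hcp, cokernel.condition])) := by
  haveI := hf; haveI := hp
  set t : cokernel c ⟶ cokernel f := cokernel.desc c (p ≫ cokernel.π f)
      (by rw [← Category.assoc, hcp, cokernel.condition]) with ht
  have hfac : cokernel.π c ≫ t = p ≫ cokernel.π f := cokernel.π_desc _ _ _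
  refine ⟨?_, ?_, ?_, ?_⟩
  · apply Abelian.Pseudoelement.mono_of_zero_of_map_zero
    intro a ha
    rw [Abelian.Pseudoelement.comp_apply] at ha
    obtain ⟨x, hx⟩ := Abelian.Pseudoelement.pseudo_exact_of_exact (ShortComplex.exact_cokernel c) _ ha
    have hx' : c x = (kernel.ι p) a := hx
    have hfx : f x = 0 := by
      rw [← hcp, Abelian.Pseudoelement.comp_apply, hx', ← Abelian.Pseudoelement.comp_apply, kernel.condition]
      exact Abelian.Pseudoelement.zero_apply _ _
    have hx0 : x = 0 := Abelian.Pseudoelement.zero_of_map_zero f (Abelian.Pseudoelement.pseudo_injective_of_mono f) x hfx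
    have hax : (kernel.ι p) a = 0 := by
      rw [← hx', hx0, Abelian.Pseudoelement.apply_zero]
    exact Abelian.Pseudoelement.zero_of_map_zero (kernel.ι p) (Abelian.Pseudoelement.pseudo_injective_of_mono _) a hax
  · exact epi_of_epi_fac hfac
  · rw [Category.assoc, hfac, ← Category.assoc, kernel.condition, zero_comp]
  · apply Abelian.Pseudoelement.exact_of_pseudo_exact
    intro b hb
    obtain ⟨e, he⟩ := Abelian.Pseudoelement.pseudo_surjective_of_epi (cokernel.π c) b
    have hpe0 : (cokernel.π f) ((p : E ⟶ Z) e) = 0 := by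
      rw [← Abelian.Pseudoelement.comp_apply, ← hfac, Abelian.Pseudoelement.comp_apply, he]; exact hb
    obtain ⟨x, hx⟩ := Abelian.Pseudoelement.pseudo_exact_of_exact (ShortComplex.exact_cokernel f) _ hpe0
    have hx' : f x = (p : E ⟶ Z) e := hx
    have hpe : p (c x) = p e := by
      rw [← Abelian.Pseudoelement.comp_apply, hcp, hx']
    obtain ⟨k, hk⟩ := exists_ker_to_coker c p e x hpe
    refine ⟨k, ?_⟩
    show (kernel.ι p ≫ cokernel.π c) k = b
    rw [hk, he]

end Aux

end Paper

open Paper in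
theorem stmt3 {C : Type u} [CategoryTheory.Category.{v} C] [CategoryTheory.Abelian C]
    [CategoryTheory.Limits.HasLimits C] [CategoryTheory.Limits.HasColimits C]
    (Q W R : C → Prop) (h : HoveyTriple Q W R) :
    (∀ ⦃X Z : C⦄ (f : X ⟶ Z),
        EpiClass (fun A => W A ∧ R A) f ↔ EpiClass R f ∧ WClass Q W R f) ∧
    (∀ ⦃X Z : C⦄ (f : X ⟶ Z),
        MonClass (fun A => Q A ∧ W A) f ↔ MonClass Q f ∧ WClass Q W R f) := by
  constructor
  · intro X Z f
    constructor
    · rintro ⟨hf, hW, hR⟩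
      refine ⟨⟨hf, hR⟩, X, 𝟙 X, f, ⟨inferInstance, ?_⟩, ⟨hf, hW, hR⟩, Category.id_comp f⟩
      have hz : IsZero (cokernel (𝟙 X)) :=
        IsZero.of_epi_eq_zero (cokernel.π (𝟙 X)) (cokernel.π_of_epi _)
      exact ⟨hovey_Q_of_isZero h hz, (hovey_WR_of_isZero h hz).1⟩
    · rintro ⟨⟨hf, hR⟩, E, c, p, ⟨hc, hcokQ, hcokW⟩, ⟨hp, hkerW, hkerR⟩, hcp⟩
      exact ⟨hf, h.thick.ker_of_epi _ _ (sesA hcp hf hc hp) hkerW hcokW, hR⟩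
  · intro X Z f
    constructor
    · rintro ⟨hf, hQ, hW⟩
      refine ⟨⟨hf, hQ⟩, Z, f, 𝟙 Z, ⟨hf, hQ, hW⟩, ⟨inferInstance, ?_⟩, Category.comp_id f⟩
      have hz : IsZero (kernel (𝟙 Z)) :=
        IsZero.of_mono_eq_zero (kernel.ι (𝟙 Z)) (kernel.ι_of_mono _)
      exact hovey_WR_of_isZero h hz
    · rintro ⟨⟨hf, hQcok⟩, E, c, p, ⟨hc, hcokQ, hcokW⟩, ⟨hp, hkerW, hkerR⟩, hcp⟩
      exact ⟨hf, hQcok, h.thick.coker_of_mono _ _ (sesB hcp hf hp) hkerW hcokW⟩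
end

section
/- A quiver I is left rooted (i.e. the transfinite sequence of vertex subsets V_χ defined by V_0 = ∅, V_{χ+1} = { i : i is not the target of any arrow a with source s(a) ∉ ∪_{μ≤χ} V_μ }, V_χ = ∪_{μ<χ} V_μ for limit χ, exhausts all vertices) if and only if I admits no infinite sequence of composable arrows of the form ⋯ → • → • → •. -/
universe u

namespace Paper

open CategoryTheory

/-- The transfinite filtration `χ ↦ ⋃_{μ ≤ χ} V_μ` of the vertex set of a quiver, where
`V_0 = ∅`, `V_{χ+1}` is the set of vertices that are not the target of any arrow whose
source lies outside `⋃_{μ ≤ χ} V_μ`, and `V_χ = ⋃_{μ < χ} V_μ` at limit ordinals. -/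
noncomputable def rootFiltration (V : Type u) [Quiver V] (χ : Ordinal.{u}) : Set V :=
  Ordinal.limitRecOn χ
    (∅ : Set V)
    (fun _ W => W ∪ { i : V | ∀ ⦃j : V⦄, (j ⟶ i) → j ∈ W })
    (fun χ' _ ih => ⋃ (μ : Ordinal.{u}) (h : μ < χ'), ih μ h)

/-- A quiver is left rooted if the transfinite sequence `V_χ` exhausts all the vertices. -/
def IsLeftRooted (V : Type u) [Quiver V] : Prop :=
  ∃ lam : Ordinal.{u}, rootFiltration V lam = Set.univ

end Paper

/-!
Left rootedness is well-foundedness of the relation "there is an arrow `j ⟶ i`", which by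
dependent choice means there is no infinite chain `⋯ → • → • → •`. Every vertex of `V_χ` is
accessible, by induction on `χ`, since its predecessors all lie in the earlier stage. Conversely,
if the relation is well founded, a vertex of rank `ρ` lies in `V_{ρ+1}` (its predecessors have
smaller rank), so the stage indexed by the supremum of these successors is everything.
-/

namespace Paper

open CategoryTheory

def HasArrow (V : Type u) [Quiver V] (j i : V) : Prop :=
  Nonempty (j ⟶ i)

variable {V : Type u} [Quiver V]

theorem rootFiltration_zero : rootFiltration V 0 = ∅ :=
  Ordinal.limitRecOn_zero _ _ _

theorem rootFiltration_add_one (χ : Ordinal.{u}) :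
    rootFiltration V (χ + 1) =
      rootFiltration V χ ∪ { i : V | ∀ ⦃j : V⦄, (j ⟶ i) → j ∈ rootFiltration V χ } :=
  Ordinal.limitRecOn_add_one _ _ _ _

theorem rootFiltration_limit {χ : Ordinal.{u}} (h : Order.IsSuccLimit χ) :
    rootFiltration V χ = ⋃ (μ : Ordinal.{u}) (_ : μ < χ), rootFiltration V μ :=
  Ordinal.limitRecOn_limit _ _ _ _ h

theorem rootFiltration_mono : Monotone (rootFiltration V) := by
  intro χ χ'
  induction χ' using Ordinal.limitRecOn with
  | zero => intro h; rw [nonpos_iff_eq_zero.mp h]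
  | add_one χ' ih =>
    intro h
    rcases h.lt_or_eq with h | rfl
    · rw [rootFiltration_add_one]
      exact (ih (Order.lt_add_one_iff.mp h)).trans Set.subset_union_left
    · rfl
  | limit χ' hχ' _ =>
    intro h
    rcases h.lt_or_eq with h | rfl
    · rw [rootFiltration_limit hχ']
      exact Set.subset_biUnion_of_mem (u := fun μ => rootFiltration V μ) h
    · rfl

theorem acc_hasArrow_of_mem_rootFiltration {χ : Ordinal.{u}} {i : V}
    (hi : i ∈ rootFiltration V χ) : Acc (HasArrow V) i := by
  induction χ using Ordinal.limitRecOn generalizing i with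
  | zero => simp [rootFiltration_zero] at hi
  | add_one χ ih =>
    rw [rootFiltration_add_one] at hi
    rcases hi with hi | hi
    · exact ih hi
    · exact ⟨_, fun j ⟨a⟩ => ih (hi a)⟩
  | limit χ hχ ih =>
    rw [rootFiltration_limit hχ] at hi
    obtain ⟨μ, hμ, hi⟩ := Set.mem_iUnion₂.mp hi
    exact ih μ hμ hi

theorem IsLeftRooted.wellFounded_hasArrow (h : IsLeftRooted V) :
    WellFounded (HasArrow V) := by
  obtain ⟨lam, hlam⟩ := h
  exact ⟨fun i => acc_hasArrow_of_mem_rootFiltration (hlam ▸ Set.mem_univ i)⟩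

theorem mem_rootFiltration_rank_add_one [IsWellFounded V (HasArrow V)] (i : V) :
    i ∈ rootFiltration V (IsWellFounded.rank (HasArrow V) i + 1) := by
  induction i using IsWellFounded.induction (HasArrow V) with
  | ind i ih =>
    rw [rootFiltration_add_one]
    refine Or.inr fun j a => ?_
    have hrank := IsWellFounded.rank_lt_of_rel (r := HasArrow V) ⟨a⟩
    exact rootFiltration_mono (Order.add_one_le_of_lt hrank) (ih j ⟨a⟩)

theorem isLeftRooted_of_wellFounded_hasArrow (h : WellFounded (HasArrow V)) :
    IsLeftRooted V := by
  have : IsWellFounded V (HasArrow V) := ⟨h⟩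
  let stage : V → Ordinal.{u} := fun i => IsWellFounded.rank (HasArrow V) i + 1
  refine ⟨⨆ i, stage i, Set.eq_univ_of_forall fun i => ?_⟩
  exact rootFiltration_mono (Ordinal.le_iSup stage i) (mem_rootFiltration_rank_add_one i)

theorem isLeftRooted_iff_wellFounded_hasArrow :
    IsLeftRooted V ↔ WellFounded (HasArrow V) :=
  ⟨IsLeftRooted.wellFounded_hasArrow, isLeftRooted_of_wellFounded_hasArrow⟩

end Paper

open Paper in
/-- A quiver is left rooted if and only if it admits no infinite sequence of composable
arrows of the form `⋯ → • → • → •`. -/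
theorem stmt6 (V : Type u) [Quiver V] :
    IsLeftRooted V ↔ ¬ ∃ f : ℕ → V, ∀ n : ℕ, Nonempty (f (n + 1) ⟶ f n) := by
  rw [isLeftRooted_iff_wellFounded_hasArrow, wellFounded_iff_isEmpty_descending_chain,
    isEmpty_subtype, not_exists]
  rfl
end
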